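/- Let x, q be complex numbers with |q| < 1. Then Σ_{i,j≥0} x^i · q^((i²+i)/2 + ij + j²) / ((q;q)_i · (q;q)_j) · (q^(i+j+1);q)_∞ = (−xq;q)_∞. -/

import Mathlib

/-- Finite q-Pochhammer symbol `(a; q)_n = ∏_{k=0}^{n-1} (1 - a q^k)`. -/
noncomputable def qPoch (a q : ℂ) (n : ℕ) : ℂ := ∏ k ∈ Finset.range n, (1 - a * q ^ k)

/-- Infinite q-Pochhammer symbol `(a; q)_∞ = ∏_{k=0}^{∞} (1 - a q^k)`. -/
noncomputable def qPochInf (a q : ℂ) : ℂ := ∏' k : ℕ, (1 - a * q ^ k)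

/-!
Summing over `j` first, the inner sum is `∑ j, z ^ j q ^ (j²) / (q;q)_j · (z q^(j+1);q)_∞` at
`z = q ^ i`, which equals `1`; what remains is Euler's series
`∑ i, q ^ (i choose 2) w ^ i / (q;q)_i = (-w;q)_∞` at `w = x q`. Both identities are limits of
finite identities with Gaussian binomial coefficients `[N, i]` in place of `1 / (q;q)_i`, proved
by induction on `N` via the q-Pascal rule; the passage to the limit is dominated convergence,
since `[N, i] → 1 / (q;q)_i` and `‖[N, i]‖ ≤ (2 / (1 - ‖q‖)) ^ i`.
-/

open Finset Filter Topology

lemma qPoch_zero (a q : ℂ) : qPoch a q 0 = 1 := prod_range_zero _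

lemma qPoch_succ (a q : ℂ) (n : ℕ) : qPoch a q (n + 1) = qPoch a q n * (1 - a * q ^ n) :=
  prod_range_succ _ _

lemma qPoch_add (a q : ℂ) (m n : ℕ) :
    qPoch a q (m + n) = qPoch a q m * ∏ k ∈ range n, (1 - a * q ^ (m + k)) :=
  prod_range_add _ m n

lemma norm_mul_pow_le {a q : ℂ} (hq : ‖q‖ ≤ 1) (k : ℕ) : ‖a * q ^ k‖ ≤ ‖a‖ := by
  rw [norm_mul, norm_pow]
  exact mul_le_of_le_one_right (norm_nonneg a) (pow_le_one₀ (norm_nonneg q) hq)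

lemma one_sub_norm_pow_le_norm_qPoch_self {q : ℂ} (hq : ‖q‖ < 1) (n : ℕ) :
    (1 - ‖q‖) ^ n ≤ ‖qPoch q q n‖ := by
  have hfactor : ∀ k, 1 - ‖q‖ ≤ ‖1 - q * q ^ k‖ := fun k =>
    (sub_le_sub_left (norm_mul_pow_le hq.le k) 1).trans
      (by simpa using norm_sub_norm_le (1 : ℂ) (q * q ^ k))
  rw [qPoch, norm_prod]
  simpa using prod_le_prod (s := range n) (fun _ _ => by linarith) fun k _ => hfactor k

lemma qPoch_self_ne_zero {q : ℂ} (hq : ‖q‖ < 1) (n : ℕ) : qPoch q q n ≠ 0 :=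
  norm_pos_iff.1 <| (pow_pos (by linarith) n).trans_le (one_sub_norm_pow_le_norm_qPoch_self hq n)

lemma norm_inv_qPoch_self_le {q : ℂ} (hq : ‖q‖ < 1) (n : ℕ) :
    ‖(qPoch q q n)⁻¹‖ ≤ (1 - ‖q‖)⁻¹ ^ n := by
  rw [norm_inv, inv_pow]
  exact inv_anti₀ (pow_pos (by linarith) n) (one_sub_norm_pow_le_norm_qPoch_self hq n)

lemma norm_qPoch_le {a q : ℂ} {M : ℝ} (hq : ‖q‖ < 1) (ha : ‖a‖ ≤ M) (n : ℕ) :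
    ‖qPoch a q n‖ ≤ Real.exp (M / (1 - ‖q‖)) := by
  have hgeom : ∑ k ∈ range n, ‖-(a * q ^ k)‖ ≤ M / (1 - ‖q‖) := by
    have hsum : ∑ k ∈ range n, ‖q‖ ^ k ≤ 1 / (1 - ‖q‖) := by
      simpa using geom_sum_Ico_le_of_lt_one (m := 0) (n := n) (norm_nonneg q) hq
    simp only [norm_neg, norm_mul, norm_pow, ← mul_sum]
    calc ‖a‖ * ∑ k ∈ range n, ‖q‖ ^ k ≤ ‖a‖ * (1 / (1 - ‖q‖)) :=
          mul_le_mul_of_nonneg_left hsum (norm_nonneg a)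
      _ ≤ M / (1 - ‖q‖) := by
          rw [mul_one_div]
          exact div_le_div_of_nonneg_right ha (by linarith)
  have h : ‖qPoch a q n - 1‖ ≤ Real.exp (∑ k ∈ range n, ‖-(a * q ^ k)‖) - 1 := by
    simpa only [qPoch, ← sub_eq_add_neg] using
      (range n).norm_prod_one_add_sub_one_le fun k => -(a * q ^ k)
  calc ‖qPoch a q n‖ ≤ ‖qPoch a q n - 1‖ + ‖(1 : ℂ)‖ := norm_le_norm_sub_add _ _
    _ ≤ Real.exp (M / (1 - ‖q‖)) := by
      rw [norm_one]
      linarith [h, Real.exp_le_exp.2 hgeom]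

lemma multipliable_one_sub_mul_pow (a : ℂ) {q : ℂ} (hq : ‖q‖ < 1) :
    Multipliable fun k : ℕ => 1 - a * q ^ k := by
  simp only [sub_eq_add_neg]
  refine multipliable_one_add_of_summable ?_
  simpa [norm_mul, norm_pow] using (summable_geometric_of_lt_one (norm_nonneg q) hq).mul_left ‖a‖

lemma tendsto_qPoch (a : ℂ) {q : ℂ} (hq : ‖q‖ < 1) :
    Tendsto (qPoch a q) atTop (𝓝 (qPochInf a q)) :=
  (multipliable_one_sub_mul_pow a hq).hasProd.tendsto_prod_nat

lemma norm_qPochInf_le {a q : ℂ} {M : ℝ} (hq : ‖q‖ < 1) (ha : ‖a‖ ≤ M) :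
    ‖qPochInf a q‖ ≤ Real.exp (M / (1 - ‖q‖)) :=
  le_of_tendsto (tendsto_qPoch a hq).norm (Eventually.of_forall (norm_qPoch_le hq ha))

noncomputable def qBinom (q : ℂ) (N i : ℕ) : ℂ :=
  if i ≤ N then qPoch q q N / (qPoch q q i * qPoch q q (N - i)) else 0

section qBinom

variable {q : ℂ}

lemma qBinom_zero_right (hq : ‖q‖ < 1) (N : ℕ) : qBinom q N 0 = 1 := by
  simp [qBinom, qPoch_zero, qPoch_self_ne_zero hq]

lemma qBinom_of_lt {N i : ℕ} (h : N < i) : qBinom q N i = 0 := if_neg h.not_ge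

lemma qBinom_succ_succ (hq : ‖q‖ < 1) (N i : ℕ) :
    qBinom q (N + 1) (i + 1) = qBinom q N (i + 1) + q ^ (N - i) * qBinom q N i := by
  rcases lt_trichotomy i N with h | rfl | h
  · obtain ⟨m, rfl⟩ := Nat.exists_eq_add_of_lt h
    simp only [qBinom, if_pos (by omega : i + 1 ≤ i + m + 1 + 1),
      if_pos (by omega : i + 1 ≤ i + m + 1), if_pos (by omega : i ≤ i + m + 1),
      Nat.add_sub_add_right, Nat.add_sub_cancel_left]
    have hfactor (n : ℕ) : qPoch q q n ≠ 0 ∧ 1 - q * q ^ n ≠ 0 :=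
      mul_ne_zero_iff.1 (qPoch_succ q q n ▸ qPoch_self_ne_zero hq (n + 1))
    obtain ⟨hi, hi'⟩ := hfactor i
    obtain ⟨hm, hm'⟩ := hfactor m
    rw [add_assoc i m 1, Nat.add_sub_cancel_left, qPoch_succ _ _ (i + (m + 1)), qPoch_succ _ _ i,
      qPoch_succ _ _ m]
    field_simp
    ring
  · simp [qBinom, qPoch_self_ne_zero hq, qPoch_zero]
  · simp [qBinom_of_lt, h, Nat.lt_succ_of_lt h]

lemma qBinom_eq_prod_div (hq : ‖q‖ < 1) {N i : ℕ} (h : i ≤ N) :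
    qBinom q N i = (∏ k ∈ range i, (1 - q * q ^ (N - i + k))) / qPoch q q i := by
  obtain ⟨m, rfl⟩ := Nat.exists_eq_add_of_le' h
  rw [qBinom, if_pos h, Nat.add_sub_cancel, qPoch_add, mul_comm (qPoch q q i),
    mul_div_mul_left _ _ (qPoch_self_ne_zero hq m)]

lemma norm_qBinom_le (hq : ‖q‖ < 1) (N i : ℕ) : ‖qBinom q N i‖ ≤ (2 / (1 - ‖q‖)) ^ i := by
  rcases le_or_gt i N with h | h
  · have hnum : ‖∏ k ∈ range i, (1 - q * q ^ (N - i + k))‖ ≤ 2 ^ i := by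
      rw [norm_prod]
      have hfactor (k : ℕ) : ‖1 - q * q ^ (N - i + k)‖ ≤ 2 := by
        linarith [norm_sub_le 1 (q * q ^ (N - i + k)), norm_one (α := ℂ),
          norm_mul_pow_le (a := q) hq.le (N - i + k)]
      simpa using prod_le_prod (s := range i) (fun _ _ => norm_nonneg _) fun k _ => hfactor k
    rw [qBinom_eq_prod_div hq h, div_eq_mul_inv, norm_mul, div_eq_mul_inv, mul_pow]
    exact mul_le_mul hnum (norm_inv_qPoch_self_le hq i) (norm_nonneg _) (by positivity)
  · rw [qBinom_of_lt h, norm_zero]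
    exact pow_nonneg (div_nonneg zero_le_two (by linarith)) i

lemma tendsto_qBinom (hq : ‖q‖ < 1) (i : ℕ) :
    Tendsto (fun N => qBinom q N i) atTop (𝓝 (qPoch q q i)⁻¹) := by
  have hfactor (k : ℕ) : Tendsto (fun N => 1 - q * q ^ (N - i + k)) atTop (𝓝 1) := by
    have hpow := (tendsto_pow_atTop_nhds_zero_of_norm_lt_one hq).comp
      ((tendsto_add_atTop_nat k).comp (tendsto_sub_atTop_nat i))
    simpa using (hpow.const_mul q).const_sub 1
  have hprod := (tendsto_finsetProd (range i) fun k _ => hfactor k).div_const (qPoch q q i)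
  rw [prod_const_one, one_div] at hprod
  exact hprod.congr' <| (eventually_ge_atTop i).mono fun N hN => (qBinom_eq_prod_div hq hN).symm

lemma sum_qBinom_succ_mul (hq : ‖q‖ < 1) (N : ℕ) (c : ℕ → ℂ) :
    ∑ i ∈ range (N + 2), qBinom q (N + 1) i * c i
      = ∑ i ∈ range (N + 1), qBinom q N i * c i
        + ∑ i ∈ range (N + 1), q ^ (N - i) * qBinom q N i * c (i + 1) := by
  have hshift := sum_range_succ' (fun i => qBinom q N i * c i) (N + 1)
  rw [sum_range_succ, qBinom_of_lt (Nat.lt_succ_self N), zero_mul, add_zero] at hshift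
  simp only [sum_range_succ' _ (N + 1), qBinom_succ_succ hq, add_mul, sum_add_distrib,
    qBinom_zero_right hq, hshift]
  ring

lemma sum_qBinom_mul_pow (hq : ‖q‖ < 1) (w : ℂ) (N : ℕ) :
    ∑ i ∈ range (N + 1), qBinom q N i * (q ^ i.choose 2 * w ^ i) = qPoch (-w) q N := by
  induction N with
  | zero => simp [qBinom_zero_right hq, qPoch_zero]
  | succ N ih =>
    have hterm : ∀ i ∈ range (N + 1),
        q ^ (N - i) * qBinom q N i * (q ^ (i + 1).choose 2 * w ^ (i + 1))
          = w * q ^ N * (qBinom q N i * (q ^ i.choose 2 * w ^ i)) := fun i hi => by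
      rw [Nat.choose_succ_succ', Nat.choose_one_right,
        ← pow_sub_mul_pow q (mem_range_succ_iff.1 hi)]
      ring
    rw [sum_qBinom_succ_mul hq, sum_congr rfl hterm, ← mul_sum, ih, qPoch_succ]
    ring

lemma sum_qBinom_mul_durfee (hq : ‖q‖ < 1) (N : ℕ) (z : ℂ) :
    ∑ j ∈ range (N + 1), qBinom q N j * (z ^ j * q ^ j ^ 2 * qPoch (z * q ^ (j + 1)) q (N - j))
      = 1 := by
  induction N generalizing z with
  | zero => simp [qBinom_zero_right hq, qPoch_zero]
  | succ N ih =>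
    -- With `D_N(z)` the left side, q-Pascal gives
    -- `D_{N+1}(z) = (1 - z q^(N+1)) D_N(z) + z q^(N+1) D_N(z q)`.
    have hfirst : ∀ j ∈ range (N + 1),
        qBinom q N j * (z ^ j * q ^ j ^ 2 * qPoch (z * q ^ (j + 1)) q (N + 1 - j))
          = (1 - z * q ^ (N + 1)) *
            (qBinom q N j * (z ^ j * q ^ j ^ 2 * qPoch (z * q ^ (j + 1)) q (N - j))) :=
        fun j hj => by
      have h := mem_range_succ_iff.1 hj
      rw [Nat.sub_add_comm h, qPoch_succ, ← pow_sub_mul_pow q (Nat.add_le_add_right h 1),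
        Nat.add_sub_add_right]
      ring
    have hsecond : ∀ j ∈ range (N + 1),
        q ^ (N - j) * qBinom q N j *
            (z ^ (j + 1) * q ^ (j + 1) ^ 2 * qPoch (z * q ^ (j + 1 + 1)) q (N + 1 - (j + 1)))
          = z * q ^ (N + 1) *
            (qBinom q N j * ((z * q) ^ j * q ^ j ^ 2 * qPoch (z * q * q ^ (j + 1)) q (N - j))) :=
        fun j hj => by
      have h := mem_range_succ_iff.1 hj
      have hexp : q ^ (N - j) * q ^ (j + 1) ^ 2 = q ^ (N + 1) * q ^ j * q ^ j ^ 2 := by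
        simp only [← pow_add]
        congr 1
        zify [h]
        ring
      rw [Nat.add_sub_add_right, mul_assoc z q, ← pow_succ']
      linear_combination (z ^ (j + 1) * qBinom q N j * qPoch (z * q ^ (j + 1 + 1)) q (N - j)) * hexp
    rw [sum_qBinom_succ_mul hq, sum_congr rfl hfirst, sum_congr rfl hsecond, ← mul_sum, ← mul_sum,
      ih, ih]
    ring

end qBinom

lemma summable_pow_mul_pow_of_add_le {C r : ℝ} (hC : 0 ≤ C) (hr0 : 0 ≤ r) (hr : r < 1)
    {e : ℕ → ℕ} (he : ∀ i, e i + i ≤ e (i + 1)) : Summable fun i => C ^ i * r ^ e i := by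
  refine summable_of_ratio_norm_eventually_le (r := 1 / 2) (by norm_num) ?_
  have hsmall : Tendsto (fun i : ℕ => C * r ^ i) atTop (𝓝 0) := by
    simpa using (tendsto_pow_atTop_nhds_zero_of_lt_one hr0 hr).const_mul C
  filter_upwards [hsmall.eventually_lt_const (by norm_num : (0 : ℝ) < 1 / 2)] with i hi
  rw [Real.norm_of_nonneg (by positivity), Real.norm_of_nonneg (by positivity)]
  calc C ^ (i + 1) * r ^ e (i + 1) ≤ C ^ (i + 1) * r ^ (e i + i) :=
        mul_le_mul_of_nonneg_left (pow_le_pow_of_le_one hr0 hr.le (he i)) (by positivity)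
    _ = (C * r ^ i) * (C ^ i * r ^ e i) := by ring
    _ ≤ 1 / 2 * (C ^ i * r ^ e i) := mul_le_mul_of_nonneg_right hi.le (by positivity)

lemma tsum_eq_of_dominated_of_tendsto_sum_range {G : Type*} [NormedAddCommGroup G]
    [CompleteSpace G] {f : ℕ → ℕ → G} {g : ℕ → G} {bound : ℕ → ℝ} {l : G}
    (h_sum : Summable bound) (h_bound : ∀ N i, ‖f N i‖ ≤ bound i)
    (h_lim : ∀ i, Tendsto (f · i) atTop (𝓝 (g i))) (h_zero : ∀ N i, N < i → f N i = 0)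
    (h_fin : Tendsto (fun N => ∑ i ∈ range (N + 1), f N i) atTop (𝓝 l)) :
    ∑' i, g i = l := by
  refine tendsto_nhds_unique ?_ h_fin
  refine (tendsto_tsum_of_dominated_convergence h_sum h_lim (Eventually.of_forall h_bound)).congr
    fun N => tsum_eq_sum fun i hi => h_zero N i ?_
  simpa using hi

section InfiniteIdentities

variable {q : ℂ}

theorem tsum_pow_choose_two_mul_pow_div_qPoch (hq : ‖q‖ < 1) (w : ℂ) :
    ∑' i, q ^ i.choose 2 * w ^ i / qPoch q q i = qPochInf (-w) q := by
  simp_rw [div_eq_inv_mul]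
  refine tsum_eq_of_dominated_of_tendsto_sum_range
    (f := fun N i => qBinom q N i * (q ^ i.choose 2 * w ^ i))
    (bound := fun i => (2 / (1 - ‖q‖) * ‖w‖) ^ i * ‖q‖ ^ i.choose 2) ?_ (fun N i => ?_)
    (fun i => (tendsto_qBinom hq i).mul_const _) (fun N i h => by simp [qBinom_of_lt h]) ?_
  · refine summable_pow_mul_pow_of_add_le ?_ (norm_nonneg q) hq fun i => ?_
    · exact mul_nonneg (div_nonneg zero_le_two (by linarith)) (norm_nonneg w)
    · simp [Nat.choose_succ_succ', add_comm]
  · rw [norm_mul, norm_mul, norm_pow, norm_pow, mul_pow]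
    calc _ ≤ (2 / (1 - ‖q‖)) ^ i * (‖q‖ ^ i.choose 2 * ‖w‖ ^ i) :=
          mul_le_mul_of_nonneg_right (norm_qBinom_le hq N i) (by positivity)
      _ = _ := by ring
  · simpa only [sum_qBinom_mul_pow hq] using tendsto_qPoch (-w) hq

theorem tsum_durfee (hq : ‖q‖ < 1) (z : ℂ) :
    ∑' j, z ^ j * q ^ j ^ 2 / qPoch q q j * qPochInf (z * q ^ (j + 1)) q = 1 := by
  have hE : ∀ j, ‖z * q ^ (j + 1)‖ ≤ ‖z‖ := fun j => norm_mul_pow_le hq.le (j + 1)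
  calc _ = ∑' j, (qPoch q q j)⁻¹ * (z ^ j * q ^ j ^ 2 * qPochInf (z * q ^ (j + 1)) q) :=
        tsum_congr fun j => by ring
    _ = 1 := by
      refine tsum_eq_of_dominated_of_tendsto_sum_range
        (f := fun N j => qBinom q N j * (z ^ j * q ^ j ^ 2 * qPoch (z * q ^ (j + 1)) q (N - j)))
        (bound := fun j => (2 / (1 - ‖q‖) * ‖z‖) ^ j * ‖q‖ ^ j ^ 2 *
          Real.exp (‖z‖ / (1 - ‖q‖))) ?_ (fun N j => ?_) (fun j => ?_)
        (fun N i h => by simp [qBinom_of_lt h]) ?_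
      · refine (summable_pow_mul_pow_of_add_le ?_ (norm_nonneg q) hq fun j => ?_).mul_right _
        · exact mul_nonneg (div_nonneg zero_le_two (by linarith)) (norm_nonneg z)
        · nlinarith
      · rw [norm_mul, norm_mul, norm_mul, norm_pow, norm_pow, mul_pow]
        calc _ ≤ (2 / (1 - ‖q‖)) ^ j * (‖z‖ ^ j * ‖q‖ ^ j ^ 2 * Real.exp (‖z‖ / (1 - ‖q‖))) :=
              mul_le_mul (norm_qBinom_le hq N j)
                (mul_le_mul_of_nonneg_left (norm_qPoch_le hq (hE j) _) (by positivity))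
                (by positivity) (by positivity)
          _ = _ := by ring
      · exact (tendsto_qBinom hq j).mul <| tendsto_const_nhds.mul <|
          (tendsto_qPoch _ hq).comp (tendsto_sub_atTop_nat j)
      · simpa only [sum_qBinom_mul_durfee hq] using tendsto_const_nhds

end InfiniteIdentities

lemma sq_add_self_div_two (i : ℕ) : (i ^ 2 + i) / 2 = i.choose 2 + i := by
  rw [show i ^ 2 + i = (i + 1) * (i + 1 - 1) by rw [Nat.add_sub_cancel]; ring,
    ← Nat.choose_two_right, Nat.choose_succ_succ', Nat.choose_one_right, add_comm]

lemma summand_eq_mul (x q : ℂ) (i j : ℕ) :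
    x ^ i * q ^ ((i ^ 2 + i) / 2 + i * j + j ^ 2) / (qPoch q q i * qPoch q q j) *
        qPochInf (q ^ (i + j + 1)) q
      = q ^ i.choose 2 * (x * q) ^ i / qPoch q q i *
        ((q ^ i) ^ j * q ^ j ^ 2 / qPoch q q j * qPochInf (q ^ i * q ^ (j + 1)) q) := by
  rw [sq_add_self_div_two, ← pow_add, add_assoc i j 1]
  ring

lemma summable_euler_mul_durfee {x q : ℂ} (hq : ‖q‖ < 1) :
    Summable fun p : ℕ × ℕ => q ^ p.1.choose 2 * (x * q) ^ p.1 / qPoch q q p.1 *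
      ((q ^ p.1) ^ p.2 * q ^ p.2 ^ 2 / qPoch q q p.2 * qPochInf (q ^ p.1 * q ^ (p.2 + 1)) q) := by
  have hd : 0 ≤ (1 - ‖q‖)⁻¹ := inv_nonneg.2 (by linarith)
  have hA : Summable fun i => ((1 - ‖q‖)⁻¹ * ‖x * q‖) ^ i * ‖q‖ ^ i.choose 2 :=
    summable_pow_mul_pow_of_add_le (by positivity) (norm_nonneg q) hq fun i => by
      simp [Nat.choose_succ_succ', add_comm]
  have hB : Summable fun j => (1 - ‖q‖)⁻¹ ^ j * ‖q‖ ^ j ^ 2 * Real.exp (1 / (1 - ‖q‖)) :=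
    (summable_pow_mul_pow_of_add_le hd (norm_nonneg q) hq fun j => by nlinarith).mul_right _
  refine Summable.of_norm_bounded (hA.mul_of_nonneg hB (fun i => by positivity)
    fun j => by positivity) fun ⟨i, j⟩ => ?_
  have ha : ‖q ^ i.choose 2 * (x * q) ^ i / qPoch q q i‖
      ≤ ((1 - ‖q‖)⁻¹ * ‖x * q‖) ^ i * ‖q‖ ^ i.choose 2 := by
    rw [div_eq_inv_mul, norm_mul, norm_mul, norm_pow, norm_pow, mul_pow]
    calc _ ≤ (1 - ‖q‖)⁻¹ ^ i * (‖q‖ ^ i.choose 2 * ‖x * q‖ ^ i) :=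
          mul_le_mul_of_nonneg_right (norm_inv_qPoch_self_le hq i) (by positivity)
      _ = _ := by ring
  have hb : ‖(q ^ i) ^ j * q ^ j ^ 2 / qPoch q q j * qPochInf (q ^ i * q ^ (j + 1)) q‖
      ≤ (1 - ‖q‖)⁻¹ ^ j * ‖q‖ ^ j ^ 2 * Real.exp (1 / (1 - ‖q‖)) := by
    have hpow : ‖q ^ i‖ ≤ 1 := by simpa using norm_mul_pow_le (a := 1) hq.le i
    rw [div_eq_inv_mul ((q ^ i) ^ j * q ^ j ^ 2), norm_mul, norm_mul, norm_mul, norm_pow (q ^ i),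
      norm_pow q (j ^ 2)]
    calc _ ≤ (1 - ‖q‖)⁻¹ ^ j * (1 * ‖q‖ ^ j ^ 2) * Real.exp (1 / (1 - ‖q‖)) := by
          gcongr
          · exact norm_inv_qPoch_self_le hq j
          · exact pow_le_one₀ (norm_nonneg _) hpow
          · exact norm_qPochInf_le hq ((norm_mul_pow_le hq.le _).trans hpow)
      _ = _ := by rw [one_mul]
  simpa only [norm_mul] using mul_le_mul ha hb (norm_nonneg _) (by positivity)

theorem stmt_13 (x q : ℂ) (hq : ‖q‖ < 1) :
    (∑' p : ℕ × ℕ,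
        x ^ p.1 * q ^ ((p.1 ^ 2 + p.1) / 2 + p.1 * p.2 + p.2 ^ 2) /
          (qPoch q q p.1 * qPoch q q p.2) * qPochInf (q ^ (p.1 + p.2 + 1)) q)
      = qPochInf (-(x * q)) q := by
  simp_rw [summand_eq_mul]
  rw [(summable_euler_mul_durfee hq).tsum_prod]
  simp_rw [tsum_mul_left, tsum_durfee hq, mul_one]
  exact tsum_pow_choose_two_mul_pow_div_qPoch hq (x * q)
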